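/- The map Θ : Aut_Ḡ(P) → N^K_Ḡ(P̄)/C_Ḡ(P̄) sending φ to ḡ·C_Ḡ(P̄), where g ∈ G is any element with (φ(u))‾ = (gug^{-1})‾ for all u ∈ P, is a well-defined surjective group homomorphism with kernel Aut_{1̄}(P); hence there are group isomorphisms Aut_Ḡ(P)/Aut_{1̄}(P) ≅ N^K_Ḡ(P̄)/C_Ḡ(P̄) ≅ U/U'. -/
import Mathlib


section GroupDefs

variable {G : Type*} [Group G]

/-- `Aut_Ḡ(P)`. -/
def AutBar (H P : Subgroup G) [H.Normal] : Subgroup (MulAut ↥P) where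
  carrier := {φ | ∃ g : G, ∀ u : ↥P, ((φ u : G) : G ⧸ H) = ↑(g⁻¹ * ↑u * g)}
  one_mem' := ⟨1, fun u => by simp⟩
  mul_mem' := by
    rintro φ ψ ⟨g, hg⟩ ⟨h, hh⟩
    refine ⟨h * g, fun u => ?_⟩
    rw [MulAut.mul_apply, hg (ψ u)]
    simp only [QuotientGroup.mk_mul, QuotientGroup.mk_inv, mul_inv_rev, hh u]
    group
  inv_mem' := by
    rintro φ ⟨g, hg⟩
    refine ⟨g⁻¹, fun u => ?_⟩
    have h1 := hg (φ⁻¹ u)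
    rw [MulAut.apply_inv_self] at h1
    simp only [QuotientGroup.mk_mul, QuotientGroup.mk_inv, inv_inv] at h1 ⊢
    rw [h1]
    group

/-- `Aut_1̄(P)`. -/
def AutOne (H P : Subgroup G) [H.Normal] : Subgroup (MulAut ↥P) where
  carrier := {φ | ∀ u : ↥P, ((φ u : G) : G ⧸ H) = ↑(u : G)}
  one_mem' := fun u => rfl
  mul_mem' := by
    intro φ ψ hφ hψ u
    rw [MulAut.mul_apply, hφ (ψ u), hψ u]
  inv_mem' := by
    intro φ hφ u
    have h1 := hφ (φ⁻¹ u)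
    rw [MulAut.apply_inv_self] at h1
    exact h1.symm

/-- `N^K_Ḡ(P̄)`: the elements `x̄ ∈ Ḡ` for which some `φ ∈ Aut(P)` satisfies
`(φ(u))‾ = x̄⁻¹ ū x̄` for all `u ∈ P`. -/
def NKbar (H P : Subgroup G) [H.Normal] : Subgroup (G ⧸ H) where
  carrier := {x | ∃ φ : MulAut ↥P, ∀ u : ↥P, ((φ u : G) : G ⧸ H) = x⁻¹ * ↑(u : G) * x}
  one_mem' := ⟨1, fun u => by simp⟩
  mul_mem' := by
    rintro x y ⟨φ, hφ⟩ ⟨ψ, hψ⟩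
    refine ⟨ψ * φ, fun u => ?_⟩
    rw [MulAut.mul_apply, hψ (φ u), hφ u]
    simp only [mul_inv_rev]
    group
  inv_mem' := by
    rintro x ⟨φ, hφ⟩
    refine ⟨φ⁻¹, fun u => ?_⟩
    have h1 := hφ (φ⁻¹ u)
    rw [MulAut.apply_inv_self] at h1
    rw [h1]
    group

/-- `C_Ḡ(P̄)`: the elements of `Ḡ` commuting with the image of `P`. -/
def Cbar (H P : Subgroup G) [H.Normal] : Subgroup (G ⧸ H) where
  carrier := {x | ∀ u : ↥P, Commute x ↑(u : G)}
  one_mem' := fun u => Commute.one_left _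
  mul_mem' := fun hx hy u => (hx u).mul_left (hy u)
  inv_mem' := fun hx u => (hx u).inv_left

/-- `U`, the inverse image of `N^K_Ḡ(P̄)` in `G`. -/
def Usub (H P : Subgroup G) [H.Normal] : Subgroup G :=
  (NKbar H P).comap (QuotientGroup.mk' H)

/-- `U'`, the inverse image of `C_Ḡ(P̄)` in `G`. -/
def Uprime (H P : Subgroup G) [H.Normal] : Subgroup G :=
  (Cbar H P).comap (QuotientGroup.mk' H)

variable (H P : Subgroup G) [H.Normal]

/-- if `(φ(u))‾ = (gug⁻¹)‾` for all `u`, then `ḡ ∈ N^K_Ḡ(P̄)`. -/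
theorem mem_NKbar_of {φ : MulAut ↥P} {g : G}
    (hg : ∀ u : ↥P, ((φ u : G) : G ⧸ H) = ↑(g * ↑u * g⁻¹)) :
    (↑g : G ⧸ H) ∈ NKbar H P := by
  refine ⟨φ⁻¹, fun u => ?_⟩
  have h1 := hg (φ⁻¹ u)
  rw [MulAut.apply_inv_self] at h1
  simp only [QuotientGroup.mk_mul, QuotientGroup.mk_inv] at h1 ⊢
  rw [h1]
  group

theorem cbar_conj {x c : G ⧸ H} (hx : x ∈ NKbar H P) (hc : c ∈ Cbar H P) :
    x * c * x⁻¹ ∈ Cbar H P := by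
  obtain ⟨φ, hφ⟩ := hx
  intro u
  have h2 := hc (φ u)
  have e1 : (↑(↑u : G) : G ⧸ H) = x * ↑((φ u : ↥P) : G) * x⁻¹ := by
    rw [hφ u]; group
  show (x * c * x⁻¹) * ↑(↑u : G) = ↑(↑u : G) * (x * c * x⁻¹)
  rw [e1]
  calc (x * c * x⁻¹) * (x * ↑((φ u : ↥P) : G) * x⁻¹)
      = x * (c * ↑((φ u : ↥P) : G)) * x⁻¹ := by group
    _ = x * (↑((φ u : ↥P) : G) * c) * x⁻¹ := by rw [h2.eq]
    _ = (x * ↑((φ u : ↥P) : G) * x⁻¹) * (x * c * x⁻¹) := by group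

instance cbar_subgroupOf_normal : ((Cbar H P).subgroupOf (NKbar H P)).Normal := by
  constructor
  intro c hc n
  rw [Subgroup.mem_subgroupOf] at hc ⊢
  exact cbar_conj H P n.2 hc

instance autOne_subgroupOf_normal : ((AutOne H P).subgroupOf (AutBar H P)).Normal := by
  constructor
  intro ψ hψ φ
  rw [Subgroup.mem_subgroupOf] at hψ ⊢
  intro u
  obtain ⟨g, hg⟩ := φ.2
  show ((((↑φ : MulAut ↥P) * ↑ψ * (↑φ : MulAut ↥P)⁻¹) u : G) : G ⧸ H) = ↑(u : G)
  rw [MulAut.mul_apply, MulAut.mul_apply]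
  have hv : ((((↑φ : MulAut ↥P)⁻¹ u : ↥P) : G) : G ⧸ H) =
      ↑g * ↑(↑u : G) * (↑g)⁻¹ := by
    have h1 := hg ((↑φ : MulAut ↥P)⁻¹ u)
    rw [MulAut.apply_inv_self] at h1
    simp only [QuotientGroup.mk_mul, QuotientGroup.mk_inv] at h1 ⊢
    rw [h1]
    group
  have h2 := hψ ((↑φ : MulAut ↥P)⁻¹ u)
  have h3 := hg ((↑ψ : MulAut ↥P) ((↑φ : MulAut ↥P)⁻¹ u))
  rw [h3]
  simp only [QuotientGroup.mk_mul, QuotientGroup.mk_inv]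
  rw [h2, hv]
  group

instance uprime_subgroupOf_normal : ((Uprime H P).subgroupOf (Usub H P)).Normal := by
  constructor
  intro c hc n
  rw [Subgroup.mem_subgroupOf] at hc ⊢
  have hn : ((↑(↑n : G) : G ⧸ H)) ∈ NKbar H P := Subgroup.mem_comap.mp n.2
  have hc' : ((↑(↑c : G) : G ⧸ H)) ∈ Cbar H P := Subgroup.mem_comap.mp hc
  have := cbar_conj H P hn hc'
  refine Subgroup.mem_comap.mpr ?_
  simpa [map_mul, map_inv] using this

end GroupDefs

section Stmt9Aux

variable {G : Type*} [Group G] (H P : Subgroup G) [H.Normal]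

theorem theta_wd {g h : G}
    (hg' : (↑g : G ⧸ H) ∈ NKbar H P) (hh' : (↑h : G ⧸ H) ∈ NKbar H P)
    (E : ∀ u : ↥P, (↑(g * ↑u * g⁻¹) : G ⧸ H) = ↑(h * ↑u * h⁻¹)) :
    (QuotientGroup.mk ⟨(↑g : G ⧸ H), hg'⟩ :
      ↥(NKbar H P) ⧸ ((Cbar H P).subgroupOf (NKbar H P))) =
    QuotientGroup.mk ⟨(↑h : G ⧸ H), hh'⟩ := by
  rw [QuotientGroup.eq, Subgroup.mem_subgroupOf]
  intro u
  have E' := E u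
  simp only [QuotientGroup.mk_mul, QuotientGroup.mk_inv] at E'
  show ((↑g : G ⧸ H)⁻¹ * ↑h) * ↑(↑u : G) = ↑(↑u : G) * ((↑g : G ⧸ H)⁻¹ * ↑h)
  calc ((↑g : G ⧸ H)⁻¹ * ↑h) * ↑(↑u : G)
      = (↑g : G ⧸ H)⁻¹ * (↑h * ↑(↑u : G) * (↑h)⁻¹) * ↑h := by group
    _ = (↑g : G ⧸ H)⁻¹ * (↑g * ↑(↑u : G) * (↑g)⁻¹) * ↑h := by rw [E']
    _ = ↑(↑u : G) * ((↑g : G ⧸ H)⁻¹ * ↑h) := by group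

/-- From the defining membership of `AutBar`, a witness in the `g u g⁻¹` form. -/
theorem autBar_witness (φ : ↥(AutBar H P)) :
    ∃ g : G, ∀ u : ↥P, (((φ : MulAut ↥P) u : G) : G ⧸ H) = ↑(g * ↑u * g⁻¹) := by
  obtain ⟨g, hg⟩ := φ.2
  exact ⟨g⁻¹, fun u => by rw [inv_inv]; exact hg u⟩

noncomputable def thetaFun (φ : ↥(AutBar H P)) :
    ↥(NKbar H P) ⧸ ((Cbar H P).subgroupOf (NKbar H P)) :=
  QuotientGroup.mk ⟨(↑(autBar_witness H P φ).choose : G ⧸ H),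
    mem_NKbar_of H P (autBar_witness H P φ).choose_spec⟩

theorem thetaFun_spec (φ : ↥(AutBar H P)) (g : G)
    (hg : ∀ u : ↥P, (((φ : MulAut ↥P) u : G) : G ⧸ H) = ↑(g * ↑u * g⁻¹)) :
    thetaFun H P φ = QuotientGroup.mk ⟨(↑g : G ⧸ H), mem_NKbar_of H P hg⟩ := by
  apply theta_wd
  intro u
  rw [← (autBar_witness H P φ).choose_spec u, hg u]

noncomputable def Theta : ↥(AutBar H P) →*
    ↥(NKbar H P) ⧸ ((Cbar H P).subgroupOf (NKbar H P)) where
  toFun := thetaFun H P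
  map_one' := by
    have h1 : ∀ u : ↥P, ((((1 : ↥(AutBar H P)) : MulAut ↥P) u : G) : G ⧸ H)
        = ↑((1 : G) * ↑u * (1 : G)⁻¹) := fun u => by simp
    rw [thetaFun_spec H P 1 1 h1]
    have : (⟨((1 : G) : G ⧸ H), mem_NKbar_of H P h1⟩ : ↥(NKbar H P)) = 1 := by
      ext; simp
    rw [this, QuotientGroup.mk_one]
  map_mul' φ ψ := by
    show thetaFun H P (φ * ψ) = thetaFun H P φ * thetaFun H P ψ
    obtain ⟨g, hg⟩ := autBar_witness H P φ
    obtain ⟨h, hh⟩ := autBar_witness H P ψ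
    have hgh : ∀ u : ↥P, ((((φ * ψ : ↥(AutBar H P)) : MulAut ↥P) u : G) : G ⧸ H)
        = ↑((g * h) * ↑u * (g * h)⁻¹) := by
      intro u
      have h1 := hg ((ψ : MulAut ↥P) u)
      have h2 := hh u
      show (((φ : MulAut ↥P) ((ψ : MulAut ↥P) u) : G) : G ⧸ H) = _
      rw [h1]
      simp only [QuotientGroup.mk_mul, QuotientGroup.mk_inv, mul_inv_rev]
      rw [h2]
      simp only [QuotientGroup.mk_mul, QuotientGroup.mk_inv]
      group
    rw [thetaFun_spec H P (φ * ψ) (g * h) hgh, thetaFun_spec H P φ g hg,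
      thetaFun_spec H P ψ h hh]
    rw [← QuotientGroup.mk_mul]
    congr 1

theorem theta_surjective : Function.Surjective (Theta H P) := by
  intro q
  induction q using QuotientGroup.induction_on with
  | H x =>
    obtain ⟨ψ, hψ⟩ := (NKbar H P).inv_mem x.2
    obtain ⟨g, hgx⟩ := QuotientGroup.mk_surjective (x : G ⧸ H)
    have hg : ∀ u : ↥P, ((ψ u : G) : G ⧸ H) = ↑(g * ↑u * g⁻¹) := by
      intro u
      rw [hψ u]
      simp only [QuotientGroup.mk_mul, QuotientGroup.mk_inv, inv_inv, hgx]
    have hmem : ψ ∈ AutBar H P := by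
      refine ⟨g⁻¹, fun u => ?_⟩
      rw [hg u]
      simp
    refine ⟨⟨ψ, hmem⟩, ?_⟩
    show thetaFun H P ⟨ψ, hmem⟩ = _
    rw [thetaFun_spec H P ⟨ψ, hmem⟩ g hg]
    congr 1
    ext
    exact hgx

theorem theta_ker : (Theta H P).ker = (AutOne H P).subgroupOf (AutBar H P) := by
  ext φ
  rw [MonoidHom.mem_ker, Subgroup.mem_subgroupOf]
  obtain ⟨g, hg⟩ := autBar_witness H P φ
  have hspec := thetaFun_spec H P φ g hg
  constructor
  · intro h1
    have h2 : (⟨(↑g : G ⧸ H), mem_NKbar_of H P hg⟩ : ↥(NKbar H P)) ∈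
        (Cbar H P).subgroupOf (NKbar H P) := by
      rw [← QuotientGroup.eq_one_iff]
      rw [show (Theta H P) φ = thetaFun H P φ from rfl, hspec] at h1
      exact h1
    rw [Subgroup.mem_subgroupOf] at h2
    intro u
    have h3 := (h2 u).eq
    rw [hg u]
    simp only [QuotientGroup.mk_mul, QuotientGroup.mk_inv]
    calc (↑g : G ⧸ H) * ↑(↑u : G) * (↑g)⁻¹
        = (↑g * ↑(↑u : G)) * (↑g)⁻¹ := by group
      _ = (↑(↑u : G) * ↑g) * (↑g)⁻¹ := by rw [← h3]
      _ = ↑(↑u : G) := by group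
  · intro h1
    have h1' : ∀ u : ↥P, (((φ : MulAut ↥P) u : G) : G ⧸ H)
        = ↑((1 : G) * ↑u * (1 : G)⁻¹) := fun u => by simpa using h1 u
    show thetaFun H P φ = 1
    rw [thetaFun_spec H P φ 1 h1']
    rw [QuotientGroup.eq_one_iff, Subgroup.mem_subgroupOf]
    intro u
    show ((1 : G) : G ⧸ H) * _ = _ * ((1 : G) : G ⧸ H)
    simp

/-- The projection `U →* NKbar`. -/
def rhoU : ↥(Usub H P) →* ↥(NKbar H P) where
  toFun g := ⟨((g : G) : G ⧸ H), Subgroup.mem_comap.mp g.2⟩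
  map_one' := by ext; simp
  map_mul' a b := by ext; simp

noncomputable def piU : ↥(Usub H P) →*
    ↥(NKbar H P) ⧸ ((Cbar H P).subgroupOf (NKbar H P)) :=
  (QuotientGroup.mk' ((Cbar H P).subgroupOf (NKbar H P))).comp (rhoU H P)

theorem piU_surjective : Function.Surjective (piU H P) := by
  intro q
  induction q using QuotientGroup.induction_on with
  | H x =>
    obtain ⟨g, hgx⟩ := QuotientGroup.mk_surjective (x : G ⧸ H)
    have hmem : g ∈ Usub H P := by
      refine Subgroup.mem_comap.mpr ?_
      show ((g : G) : G ⧸ H) ∈ NKbar H P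
      rw [hgx]; exact x.2
    refine ⟨⟨g, hmem⟩, ?_⟩
    show QuotientGroup.mk (rhoU H P ⟨g, hmem⟩) = _
    congr 1
    ext
    exact hgx

theorem piU_ker : (piU H P).ker = (Uprime H P).subgroupOf (Usub H P) := by
  ext g
  rw [MonoidHom.mem_ker, Subgroup.mem_subgroupOf]
  show QuotientGroup.mk (rhoU H P g) = 1 ↔ _
  rw [QuotientGroup.eq_one_iff, Subgroup.mem_subgroupOf]
  exact Iff.rfl

end Stmt9Aux

/-- The map `Θ : Aut_Ḡ(P) → N^K_Ḡ(P̄)/C_Ḡ(P̄)` sending `φ` to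
`ḡ·C_Ḡ(P̄)`, where `g ∈ G` is any element with `(φ(u))‾ = (gug⁻¹)‾` for all `u ∈ P`, is a
well-defined surjective group homomorphism with kernel `Aut_1̄(P)`; hence there are group
isomorphisms `Aut_Ḡ(P)/Aut_1̄(P) ≅ N^K_Ḡ(P̄)/C_Ḡ(P̄) ≅ U/U'`. -/
theorem stmt9
    (G : Type*) [Group G] [Finite G] (H P : Subgroup G) [H.Normal]
    (p : ℕ) [Fact p.Prime] (hP : IsPGroup p ↥P) :
    (∃ Θ : ↥(AutBar H P) →* ↥(NKbar H P) ⧸ ((Cbar H P).subgroupOf (NKbar H P)),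
      (∀ (φ : ↥(AutBar H P)) (g : G)
          (hg : ∀ u : ↥P, (((φ : MulAut ↥P) u : G) : G ⧸ H) = ↑(g * ↑u * g⁻¹)),
        Θ φ = QuotientGroup.mk ⟨(↑g : G ⧸ H), mem_NKbar_of H P hg⟩) ∧
      Function.Surjective Θ ∧
      Θ.ker = (AutOne H P).subgroupOf (AutBar H P)) ∧
    Nonempty ((↥(AutBar H P) ⧸ ((AutOne H P).subgroupOf (AutBar H P))) ≃*
      (↥(NKbar H P) ⧸ ((Cbar H P).subgroupOf (NKbar H P)))) ∧
    Nonempty ((↥(NKbar H P) ⧸ ((Cbar H P).subgroupOf (NKbar H P))) ≃*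
      (↥(Usub H P) ⧸ ((Uprime H P).subgroupOf (Usub H P)))) := by
  refine ⟨⟨Theta H P, ?_, theta_surjective H P, theta_ker H P⟩, ?_, ?_⟩
  · intro φ g hg
    exact thetaFun_spec H P φ g hg
  · exact ⟨(QuotientGroup.quotientMulEquivOfEq (theta_ker H P).symm).trans
      (QuotientGroup.quotientKerEquivOfSurjective (Theta H P) (theta_surjective H P))⟩
  · exact ⟨((QuotientGroup.quotientMulEquivOfEq (piU_ker H P).symm).trans
      (QuotientGroup.quotientKerEquivOfSurjective (piU H P) (piU_surjective H P))).symm⟩
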